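/- arXiv:2107.04861 — 2 statements merged into one kernel-verified Lean document; each statement's English description precedes it below -/
import Mathlib

section
/- Let K be a finite field of cardinality ℓ, and let R ⊆ R̃ be two subgroups of the multiplicative group K^×. Let G be a subgroup of GL₂(K) contained in {g ∈ GL₂(K) : det(g) ∈ R̃}. Fix a monic quadratic polynomial P(x) = x² − a·x + b ∈ K[x]. Then the sum Σ_C |C|, taken over all conjugacy classes C of G consisting of elements whose characteristic polynomial equals P(x), is at most 2·(|R̃|/|R|)·(ℓ² + ℓ). -/
open Matrix Polynomial

/-- Let `K` be a finite field with `ℓ` elements, `R ⊆ R̃` subgroups of `Kˣ`,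
and `G` a subgroup of `GL₂(K)` contained in `{g : det g ∈ R̃}`.  For a fixed monic
quadratic `P(x) = x² - a·x + b`, the sum of the cardinalities of the conjugacy classes of
`G` consisting of elements with characteristic polynomial `P` is at most
`2 · (|R̃|/|R|) · (ℓ² + ℓ)`. -/
theorem sum_card_conjClasses_with_charpoly_le
    {K : Type*} [Field K] [Fintype K] (ℓ : ℕ) (hK : Fintype.card K = ℓ)
    (R Rt : Subgroup Kˣ) (hRRt : R ≤ Rt)
    (G : Subgroup (GL (Fin 2) K))
    (hG : ∀ g ∈ G, Matrix.GeneralLinearGroup.det g ∈ Rt)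
    (a b : K) :
    ∑ᶠ c ∈ {c : ConjClasses G | ∀ g ∈ c.carrier,
        Matrix.charpoly ((g : GL (Fin 2) K) : Matrix (Fin 2) (Fin 2) K) =
          X ^ 2 - C a * X + C b},
      Nat.card c.carrier ≤ 2 * (Nat.card Rt / Nat.card R) * (ℓ ^ 2 + ℓ) := by
  classical
  have key : ∀ M : Matrix (Fin 2) (Fin 2) K,
      M.charpoly = X ^ 2 - C a * X + C b →
      M 0 0 + M 1 1 = a ∧ M 0 0 * M 1 1 - M 0 1 * M 1 0 = b := by
    intro M hM
    have htr : trace M = a := by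
      have := M.trace_eq_neg_charpoly_coeff
      rw [hM] at this
      simp only [Fintype.card_fin] at this
      rw [this]; simp [coeff_X, coeff_C]
    have hdet : det M = b := by
      have := M.det_eq_sign_charpoly_coeff
      rw [hM] at this
      simp only [Fintype.card_fin] at this
      rw [this]; simp [coeff_C]
    rw [Matrix.trace_fin_two] at htr
    rw [Matrix.det_fin_two] at hdet
    exact ⟨htr, hdet⟩
  set S : Set (ConjClasses G) := {c : ConjClasses G | ∀ g ∈ c.carrier,
      Matrix.charpoly ((g : GL (Fin 2) K) : Matrix (Fin 2) (Fin 2) K) =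
        X ^ 2 - C a * X + C b} with hS
  have hSfin : S.Finite := Set.toFinite S
  rw [finsum_mem_eq_finite_toFinset_sum _ hSfin]
  -- fibers
  set fib : ConjClasses G → Finset G :=
    fun c => Finset.univ.filter (fun g => ConjClasses.mk g = c) with hfibdef
  have hfib : ∀ c : ConjClasses G, Nat.card c.carrier = (fib c).card := by
    intro c
    have hc : c.carrier = ↑(fib c) := by
      ext g; simp [hfibdef, ConjClasses.mem_carrier_iff_mk_eq]
    rw [hc, Nat.card_coe_set_eq, Set.ncard_coe_finset]
  simp_rw [hfib]
  set TF : Finset G := Finset.univ.filter (fun g : G =>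
      Matrix.charpoly ((g : GL (Fin 2) K) : Matrix (Fin 2) (Fin 2) K) =
        X ^ 2 - C a * X + C b) with hTF
  have hdisj : ∀ c ∈ hSfin.toFinset, ∀ d ∈ hSfin.toFinset, c ≠ d →
      Disjoint (fib c) (fib d) := by
    intro c _ d _ hcd
    refine Finset.disjoint_left.mpr ?_
    intro g hg hg'
    simp only [hfibdef, Finset.mem_filter] at hg hg'
    exact hcd (hg.2 ▸ hg'.2.symm ▸ rfl)
  have hsum : ∑ c ∈ hSfin.toFinset, (fib c).card
      = (hSfin.toFinset.biUnion fib).card := (Finset.card_biUnion hdisj).symm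
  rw [hsum]
  have hsub : hSfin.toFinset.biUnion fib ⊆ TF := by
    intro g hg
    simp only [Finset.mem_biUnion, hfibdef, Finset.mem_filter, Finset.mem_univ,
      true_and] at hg
    obtain ⟨c, hc, hgc⟩ := hg
    rw [Set.Finite.mem_toFinset] at hc
    have : g ∈ c.carrier := ConjClasses.mem_carrier_iff_mk_eq.mpr hgc
    simp only [hTF, Finset.mem_filter, Finset.mem_univ, true_and]
    exact hc g this
  have h1 : (hSfin.toFinset.biUnion fib).card ≤ TF.card := Finset.card_le_card hsub
  -- injection into K × (K ⊕ K)
  have hTFcard : TF.card ≤ 2 * ℓ ^ 2 := by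
    set φ : G → K × (K ⊕ K) := fun g =>
      (((g : GL (Fin 2) K) : Matrix (Fin 2) (Fin 2) K) 0 0,
        if ((g : GL (Fin 2) K) : Matrix (Fin 2) (Fin 2) K) 0 1 = 0 then
          Sum.inl (((g : GL (Fin 2) K) : Matrix (Fin 2) (Fin 2) K) 1 0)
        else Sum.inr (((g : GL (Fin 2) K) : Matrix (Fin 2) (Fin 2) K) 0 1)) with hφ
    have hinj : Set.InjOn φ ↑TF := by
      intro g hg h hh heq
      simp only [hTF, Finset.coe_filter, Set.mem_setOf_eq, Finset.mem_univ,
        true_and] at hg hh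
      obtain ⟨hg1, hg2⟩ := key _ hg
      obtain ⟨hh1, hh2⟩ := key _ hh
      set M := ((g : GL (Fin 2) K) : Matrix (Fin 2) (Fin 2) K) with hM
      set N := ((h : GL (Fin 2) K) : Matrix (Fin 2) (Fin 2) K) with hN
      have e00 : M 0 0 = N 0 0 := congrArg Prod.fst heq
      have e11 : M 1 1 = N 1 1 := by
        have : a - M 0 0 = a - N 0 0 := by rw [e00]
        calc M 1 1 = a - M 0 0 := by linear_combination hg1
        _ = a - N 0 0 := this
        _ = N 1 1 := by linear_combination -hh1
      have esnd := congrArg Prod.snd heq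
      simp only [hφ] at esnd
      have eMN : M = N := by
        have h4 : M 0 1 = N 0 1 ∧ M 1 0 = N 1 0 := by
          by_cases hM01 : M 0 1 = 0
          · by_cases hN01 : N 0 1 = 0
            · rw [if_pos hM01, if_pos hN01] at esnd
              exact ⟨hM01.trans hN01.symm, Sum.inl.inj esnd⟩
            · rw [if_pos hM01, if_neg hN01] at esnd
              exact absurd esnd (by simp)
          · by_cases hN01 : N 0 1 = 0
            · rw [if_neg hM01, if_pos hN01] at esnd
              exact absurd esnd (by simp)
            · rw [if_neg hM01, if_neg hN01] at esnd
              have e01 : M 0 1 = N 0 1 := Sum.inr.inj esnd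
              refine ⟨e01, ?_⟩
              have h2 : M 0 1 * M 1 0 = N 0 1 * N 1 0 := by
                linear_combination -hg2 + hh2 + M 1 1 * e00 + N 0 0 * e11
              rw [e01] at h2
              exact mul_left_cancel₀ (e01 ▸ hM01) h2
        obtain ⟨e01, e10⟩ := h4
        ext i j
        fin_cases i <;> fin_cases j <;> assumption
      exact Subtype.ext (Units.ext eMN)
    have := Finset.card_le_card_of_injOn φ (fun g _ => Finset.mem_univ (φ g)) hinj
    calc TF.card ≤ (Finset.univ : Finset (K × (K ⊕ K))).card := this
      _ = Fintype.card (K × (K ⊕ K)) := rfl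
      _ = 2 * ℓ ^ 2 := by
          simp [Fintype.card_prod, Fintype.card_sum, hK]; ring
  -- final arithmetic
  have hq : 1 ≤ Nat.card Rt / Nat.card R := by
    have hdvd : Nat.card R ∣ Nat.card Rt := Subgroup.card_dvd_of_le hRRt
    have hpos : 0 < Nat.card R := Nat.card_pos
    exact (Nat.one_le_div_iff hpos).mpr (Nat.le_of_dvd (Nat.card_pos) hdvd)
  calc (hSfin.toFinset.biUnion fib).card ≤ TF.card := h1
    _ ≤ 2 * ℓ ^ 2 := hTFcard
    _ ≤ 2 * 1 * (ℓ ^ 2 + ℓ) := by nlinarith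
    _ ≤ 2 * (Nat.card Rt / Nat.card R) * (ℓ ^ 2 + ℓ) := by
        exact Nat.mul_le_mul_right _ (Nat.mul_le_mul_left 2 hq)
end

section
/- Let K be a finite field of cardinality ℓ, let R ⊆ R̃ be two subgroups of K^×, and let G be a subgroup of GL₂(K) with G ⊆ {g ∈ GL₂(K) : det(g) ∈ R̃}. Then for any subset A of K and any subset B of K^×, the number of elements g ∈ G whose trace lies in A and whose determinant lies in B is at most 2·|A|·|B|·(|R̃|/|R|)·(ℓ² + ℓ). -/
open Matrix

/-- Let `K` be a finite field with `ℓ` elements, `R ⊆ R̃` subgroups of `Kˣ`,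
and `G` a subgroup of `GL₂(K)` contained in `{g : det g ∈ R̃}`.  For any subset `A ⊆ K`
and any subset `B ⊆ Kˣ`, the number of `g ∈ G` with trace in `A` and determinant in `B`
is at most `2 · |A| · |B| · (|R̃|/|R|) · (ℓ² + ℓ)`. -/
theorem card_with_trace_and_det_in_le
    {K : Type*} [Field K] [Fintype K] (ℓ : ℕ) (hK : Fintype.card K = ℓ)
    (R Rt : Subgroup Kˣ) (hRRt : R ≤ Rt)
    (G : Subgroup (GL (Fin 2) K))
    (hG : ∀ g ∈ G, Matrix.GeneralLinearGroup.det g ∈ Rt)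
    (A : Set K) (B : Set Kˣ) :
    Nat.card {g : GL (Fin 2) K // g ∈ G ∧
        Matrix.trace ((g : Matrix (Fin 2) (Fin 2) K)) ∈ A ∧
        Matrix.GeneralLinearGroup.det g ∈ B} ≤
      2 * Nat.card A * Nat.card B * (Nat.card Rt / Nat.card R) * (ℓ ^ 2 + ℓ) := by
  classical
  set S := {g : GL (Fin 2) K // g ∈ G ∧
        Matrix.trace ((g : Matrix (Fin 2) (Fin 2) K)) ∈ A ∧
        Matrix.GeneralLinearGroup.det g ∈ B}
  -- injection into A × B × K × (K ⊕ K)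
  have key : Nat.card S ≤ Nat.card (A × B × K × (K ⊕ K)) := by
    apply Nat.card_le_card_of_injective
      (f := fun g : S => (⟨_, g.2.2.1⟩, ⟨_, g.2.2.2⟩, ((g : GL (Fin 2) K) : Matrix (Fin 2) (Fin 2) K) 0 0,
        if ((g : GL (Fin 2) K) : Matrix (Fin 2) (Fin 2) K) 0 1 = 0 then
          Sum.inr (((g : GL (Fin 2) K) : Matrix (Fin 2) (Fin 2) K) 1 0)
        else Sum.inl (((g : GL (Fin 2) K) : Matrix (Fin 2) (Fin 2) K) 0 1)))
    rintro ⟨g, hgG, hgA, hgB⟩ ⟨g', hg'G, hg'A, hg'B⟩ h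
    simp only [Prod.mk.injEq, Subtype.mk.injEq] at h
    obtain ⟨htr, hdet, h00, hsum⟩ := h
    set M := ((g : GL (Fin 2) K) : Matrix (Fin 2) (Fin 2) K) with hM
    set M' := ((g' : GL (Fin 2) K) : Matrix (Fin 2) (Fin 2) K) with hM'
    rw [Matrix.trace_fin_two, Matrix.trace_fin_two] at htr
    have h11 : M 1 1 = M' 1 1 := by
      have := htr; rw [h00] at this; exact add_left_cancel this
    have hdet' : M.det = M'.det := by
      have := congrArg Units.val hdet
      rwa [Matrix.GeneralLinearGroup.val_det_apply, Matrix.GeneralLinearGroup.val_det_apply] at this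
    rw [Matrix.det_fin_two, Matrix.det_fin_two, h00, h11] at hdet'
    have hMeq : M = M' := by
      have h0110 : M 0 1 = M' 0 1 ∧ M 1 0 = M' 1 0 := by
        by_cases hb : M 0 1 = 0 <;> by_cases hb' : M' 0 1 = 0 <;>
          simp only [hb, hb', if_pos, if_neg, if_true, if_false] at hsum
        · exact ⟨hb.trans hb'.symm, Sum.inr.inj hsum⟩
        · exact absurd hsum (by simp)
        · exact absurd hsum (by simp)
        · have hbb : M 0 1 = M' 0 1 := Sum.inl.inj hsum
          refine ⟨hbb, ?_⟩
          rw [hbb] at hdet'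
          have : M' 0 1 * M 1 0 = M' 0 1 * M' 1 0 := by linear_combination -hdet'
          exact mul_left_cancel₀ hb' this
      ext i j
      fin_cases i <;> fin_cases j
      · exact h00
      · exact h0110.1
      · exact h0110.2
      · exact h11
    have : (g : GL (Fin 2) K) = (g' : GL (Fin 2) K) := Units.ext hMeq
    exact Subtype.ext this
  have hcard : Nat.card (A × B × K × (K ⊕ K)) =
      Nat.card A * (Nat.card B * (ℓ * (ℓ + ℓ))) := by
    simp [Nat.card_prod, Nat.card_sum, Nat.card_eq_fintype_card, hK]
  have hr : 1 ≤ Nat.card Rt / Nat.card R := by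
    have hdvd : Nat.card R ∣ Nat.card Rt := Subgroup.card_dvd_of_le hRRt
    have hpos : 0 < Nat.card R := Nat.card_pos
    have hpos' : 0 < Nat.card Rt := Nat.card_pos
    exact (Nat.one_le_div_iff hpos).mpr (Nat.le_of_dvd hpos' hdvd)
  calc Nat.card S ≤ Nat.card A * (Nat.card B * (ℓ * (ℓ + ℓ))) := by rw [← hcard]; exact key
    _ ≤ 2 * Nat.card A * Nat.card B * 1 * (ℓ ^ 2 + ℓ) := by ring_nf; nlinarith [Nat.zero_le (Nat.card A * Nat.card B * ℓ)]
    _ ≤ 2 * Nat.card A * Nat.card B * (Nat.card Rt / Nat.card R) * (ℓ ^ 2 + ℓ) := by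
        exact Nat.mul_le_mul_right _ (Nat.mul_le_mul_left _ hr)
end
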